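/- Let G be a finite connected simple graph and x a vertex of G. Then the x-geodomination number of G equals the cardinality of the boundary of x: g_x(G) = |∂(x)|. -/

import Mathlib

open SimpleGraph

/-- The boundary of a vertex `x`: vertices `v` all of whose neighbors are
no further from `x` than `v` itself. -/
def boundary {V : Type*} (G : SimpleGraph V) (x : V) : Set V :=
  {v | ∀ w, G.Adj v w → G.dist x w ≤ G.dist x v}

/-- `S` is an `x`-geodominating set: every vertex lies on an `x`–`y` geodesic
for some `y ∈ S`. -/
def IsGeodominatingSet {V : Type*} (G : SimpleGraph V) (x : V) (S : Set V) : Prop :=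
  ∀ u : V, ∃ y ∈ S, G.dist x u + G.dist u y = G.dist x y

/-- The `x`-geodomination number: the minimum cardinality of an `x`-geodominating set. -/
noncomputable def geodominationNumber {V : Type*} (G : SimpleGraph V) (x : V) : ℕ :=
  sInf {n : ℕ | ∃ S : Set V, IsGeodominatingSet G x S ∧ S.ncard = n}

/-! A boundary vertex `v` on an `x`–`y` geodesic must be its end `y`: otherwise the next vertex
of a `v`–`y` geodesic is a neighbor of `v` farther from `x`. So every `x`-geodominating set
contains `∂(x)`. Conversely, given `u`, an `x`–`y` geodesic through `u` with `y` as far from `x`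
as possible ends on the boundary, since a farther neighbor `w` of `y` would extend it to an
`x`–`w` geodesic through `u`. Hence `∂(x)` is the unique minimum `x`-geodominating set. -/

namespace SimpleGraph

variable {V : Type*} {G : SimpleGraph V} {x u v w y : V}

theorem Reachable.exists_adj_dist_eq_add_one (hr : G.Reachable v y) (hne : v ≠ y) :
    ∃ w, G.Adj v w ∧ G.dist v y = G.dist w y + 1 := by
  obtain ⟨p, hp⟩ := hr.exists_walk_length_eq_dist
  cases p with
  | nil => exact absurd rfl hne
  | @cons _ w _ hadj q =>
    refine ⟨w, hadj, le_antisymm ?_ ?_⟩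
    · calc G.dist v y ≤ G.dist v w + G.dist w y := hadj.reachable.dist_triangle_left y
        _ = G.dist w y + 1 := by rw [dist_eq_one_iff_adj.mpr hadj, add_comm]
    · rw [← hp, Walk.length_cons]
      exact Nat.add_le_add_right (dist_le q) 1

theorem eq_of_mem_boundary_of_dist_add_dist_eq (hG : G.Connected) (hv : v ∈ boundary G x)
    (h : G.dist x v + G.dist v y = G.dist x y) : v = y := by
  by_contra hne
  obtain ⟨w, hadj, hw⟩ := (hG v y).exists_adj_dist_eq_add_one hne
  have hxw : G.dist x w ≤ G.dist x v := hv w hadj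
  have hxy : G.dist x y ≤ G.dist x w + G.dist w y := hG.dist_triangle
  omega

theorem boundary_subset_of_isGeodominatingSet (hG : G.Connected) {S : Set V}
    (hS : IsGeodominatingSet G x S) : boundary G x ⊆ S := by
  intro v hv
  obtain ⟨y, hyS, hy⟩ := hS v
  rwa [eq_of_mem_boundary_of_dist_add_dist_eq hG hv hy]

theorem dist_add_dist_eq_of_adj_of_dist_lt (hG : G.Connected)
    (h : G.dist x u + G.dist u y = G.dist x y) (hadj : G.Adj y w)
    (hlt : G.dist x y < G.dist x w) : G.dist x u + G.dist u w = G.dist x w := by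
  have hyw : G.dist y w = 1 := dist_eq_one_iff_adj.mpr hadj
  have hxw : G.dist x w ≤ G.dist x y + G.dist y w := hG.dist_triangle
  have huw : G.dist u w ≤ G.dist u y + G.dist y w := hG.dist_triangle
  have hxuw : G.dist x w ≤ G.dist x u + G.dist u w := hG.dist_triangle
  omega

theorem isGeodominatingSet_boundary [Finite V] (hG : G.Connected) (x : V) :
    IsGeodominatingSet G x (boundary G x) := by
  intro u
  obtain ⟨y, hy, hmax⟩ := Set.Finite.exists_maximalFor (G.dist x)
    {y | G.dist x u + G.dist u y = G.dist x y} (Set.toFinite _) ⟨u, by simp⟩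
  refine ⟨y, fun w hadj => ?_, hy⟩
  by_contra! hlt
  have hw := dist_add_dist_eq_of_adj_of_dist_lt hG hy hadj hlt
  exact hlt.not_ge (hmax hw hlt.le)

end SimpleGraph

theorem geodominationNumber_eq_ncard_boundary {V : Type*} [Fintype V] (G : SimpleGraph V)
    (hG : G.Connected) (x : V) :
    geodominationNumber G x = (boundary G x).ncard := by
  refine IsLeast.csInf_eq ⟨⟨_, isGeodominatingSet_boundary hG x, rfl⟩, ?_⟩
  rintro n ⟨S, hS, rfl⟩
  exact Set.ncard_le_ncard (boundary_subset_of_isGeodominatingSet hG hS)
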